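/- arXiv:2405.20257 — 4 statements merged into one kernel-verified Lean document; each statement's English description precedes it below -/
import Mathlib

section
/- Let G_1, ..., G_n be finite groups and let p and q be distinct primes. The direct product G_1 × ... × G_n contains a Schmidt (p,q)-subgroup if and only if at least one of the groups G_i contains a Schmidt (p,q)-subgroup. -/
/-- A Schmidt group: a finite non-nilpotent group all of whose proper subgroups are nilpotent. -/
def IsSchmidtGroup (G : Type*) [Group G] : Prop :=
  Finite G ∧ ¬ Group.IsNilpotent G ∧ ∀ H : Subgroup G, H ≠ ⊤ → Group.IsNilpotent H

/-- A Schmidt `(p, q)`-group: a Schmidt group whose order is divisible by no primes other than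
`p` and `q` and whose Sylow `p`-subgroup is normal. -/
def IsSchmidtPQGroup (p q : ℕ) (G : Type*) [Group G] : Prop :=
  IsSchmidtGroup G ∧ (∀ r : ℕ, r.Prime → r ∣ Nat.card G → r = p ∨ r = q) ∧
    ∀ P : Sylow p G, (P : Subgroup G).Normal

/-- `G` contains a Schmidt `(p, q)`-subgroup. -/
def HasSchmidtPQSubgroup (p q : ℕ) (G : Type*) [Group G] : Prop :=
  ∃ H : Subgroup G, IsSchmidtPQGroup p q H

/-!
A subgroup `S` of `∏ Gᵢ` embeds into the product of its projections `πᵢ(S)`, so if `S` is not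
nilpotent then some `πᵢ(S)` is not. As a quotient of a Schmidt `(p, q)`-group, `πᵢ(S)` is a
`{p, q}`-group with normal Sylow `p`-subgroup, and both properties pass to its subgroups; hence a
minimal non-nilpotent subgroup of `πᵢ(S)` is a Schmidt `(p, q)`-subgroup of `Gᵢ`. Conversely, `Gᵢ`
embeds into the product.
-/

section NormalSylow

variable {p : ℕ} [Fact p.Prime] {G H : Type*} [Group G] [Group H]

theorem Sylow.normal_of_normal_isPGroup [Finite (Sylow p G)] {N : Subgroup G} [N.Normal]
    (hN : IsPGroup p N) (hidx : ¬ p ∣ N.index) (P : Sylow p G) : (P : Subgroup G).Normal := by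
  have := Sylow.unique_of_normal (hN.toSylow hidx) ‹N.Normal›
  exact Sylow.normal_of_subsingleton P

theorem Sylow.normal_of_injective [Finite G] (f : H →* G) (hf : Function.Injective f)
    (h : ∀ P : Sylow p G, (P : Subgroup G).Normal) (Q : Sylow p H) :
    (Q : Subgroup H).Normal := by
  have : Finite (Sylow p H) := Sylow.finite_of_injective hf
  obtain ⟨P⟩ : Nonempty (Sylow p G) := inferInstance
  have hP : (P : Subgroup G).Normal := h P
  have := hP.comap f
  refine Sylow.normal_of_normal_isPGroup (P.2.comap_of_injective f hf) (fun hdvd ↦ ?_) Q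
  rw [Subgroup.index_comap] at hdvd
  exact P.not_dvd_index (hdvd.trans (Subgroup.relIndex_dvd_index_of_normal _ _))

theorem Sylow.normal_of_surjective [Finite G] (f : G →* H) (hf : Function.Surjective f)
    (h : ∀ P : Sylow p G, (P : Subgroup G).Normal) (Q : Sylow p H) :
    (Q : Subgroup H).Normal := by
  have : Finite H := Finite.of_surjective f hf
  obtain ⟨P⟩ : Nonempty (Sylow p G) := inferInstance
  have := (h P).map f hf
  exact Sylow.normal_of_normal_isPGroup (P.2.map f)
    (fun hdvd ↦ P.not_dvd_index (hdvd.trans (Subgroup.index_map_dvd _ hf))) Q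

end NormalSylow

theorem isNilpotent_of_injective {G H : Type*} [Group G] [Group H] [Group.IsNilpotent H]
    (f : G →* H) (hf : Function.Injective f) : Group.IsNilpotent G :=
  (Group.isNilpotent_congr (MonoidHom.ofInjective hf)).2 inferInstance

theorem Subgroup.isNilpotent_of_forall_isNilpotent_map_eval {ι : Type*} [Finite ι]
    {G : ι → Type*} [∀ i, Group (G i)] (S : Subgroup (∀ i, G i))
    (h : ∀ i, Group.IsNilpotent (S.map (Pi.evalMonoidHom G i))) : Group.IsNilpotent S :=
  isNilpotent_of_injective (MonoidHom.pi fun i ↦ (Pi.evalMonoidHom G i).subgroupMap S)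
    fun _ _ hst ↦ Subtype.ext <| funext fun i ↦ congrArg Subtype.val (congrFun hst i)

/-- `IsSchmidtPQGroup p q G` unfolds to `IsSchmidtGroup G ∧ IsPQGroupWithNormalSylow p q G`. -/
def IsPQGroupWithNormalSylow (p q : ℕ) (G : Type*) [Group G] : Prop :=
  (∀ r : ℕ, r.Prime → r ∣ Nat.card G → r = p ∨ r = q) ∧ ∀ P : Sylow p G, (P : Subgroup G).Normal

namespace IsPQGroupWithNormalSylow

variable {p q : ℕ} [Fact p.Prime] {G H : Type*} [Group G] [Group H]

theorem of_injective [Finite G] (f : H →* G) (hf : Function.Injective f)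
    (h : IsPQGroupWithNormalSylow p q G) : IsPQGroupWithNormalSylow p q H :=
  ⟨fun r hr hdvd ↦ h.1 r hr (hdvd.trans (Subgroup.card_dvd_of_injective f hf)),
    Sylow.normal_of_injective f hf h.2⟩

theorem of_surjective [Finite G] (f : G →* H) (hf : Function.Surjective f)
    (h : IsPQGroupWithNormalSylow p q G) : IsPQGroupWithNormalSylow p q H :=
  ⟨fun r hr hdvd ↦ h.1 r hr (hdvd.trans (Subgroup.card_dvd_of_surjective f hf)),
    Sylow.normal_of_surjective f hf h.2⟩

end IsPQGroupWithNormalSylow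

theorem IsSchmidtGroup.of_mulEquiv {G H : Type*} [Group G] [Group H] (e : G ≃* H)
    (h : IsSchmidtGroup G) : IsSchmidtGroup H := by
  obtain ⟨hfin, hnil, hsub⟩ := h
  refine ⟨Finite.of_equiv G e.toEquiv, fun hH ↦ hnil ((Group.isNilpotent_congr e).2 hH),
    fun K hK ↦ ?_⟩
  have hK' : K.map e.symm.toMonoidHom ≠ ⊤ := fun htop ↦
    hK <| Subgroup.map_injective e.symm.injective <|
      htop.trans (Subgroup.map_top_of_surjective _ e.symm.surjective).symm
  exact (Group.isNilpotent_congr (e.symm.subgroupMap K)).2 (hsub _ hK')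

theorem IsSchmidtPQGroup.of_mulEquiv {p q : ℕ} [Fact p.Prime] {G H : Type*} [Group G] [Group H]
    (e : G ≃* H) (h : IsSchmidtPQGroup p q G) : IsSchmidtPQGroup p q H :=
  have : Finite G := h.1.1
  ⟨h.1.of_mulEquiv e, IsPQGroupWithNormalSylow.of_surjective e.toMonoidHom e.surjective h.2⟩

theorem HasSchmidtPQSubgroup.of_injective {p q : ℕ} [Fact p.Prime] {G H : Type*} [Group G]
    [Group H] (f : G →* H) (hf : Function.Injective f) (h : HasSchmidtPQSubgroup p q G) :
    HasSchmidtPQSubgroup p q H :=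
  let ⟨K, hK⟩ := h
  ⟨K.map f, hK.of_mulEquiv (K.equivMapOfInjective f hf)⟩

theorem Subgroup.exists_le_isSchmidtPQGroup {p q : ℕ} [Fact p.Prime] {G : Type*} [Group G]
    [Finite G] {T : Subgroup G} (hT : ¬ Group.IsNilpotent T)
    (hpq : IsPQGroupWithNormalSylow p q T) : ∃ H ≤ T, IsSchmidtPQGroup p q H := by
  obtain ⟨H, hHT, hmin⟩ :=
    exists_minimal_le_of_wellFoundedLT (fun H : Subgroup G ↦ ¬ Group.IsNilpotent H) T hT
  refine ⟨H, hHT, ⟨inferInstance, hmin.prop, fun K hK ↦ ?_⟩,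
    hpq.of_injective (Subgroup.inclusion hHT) (Subgroup.inclusion_injective hHT)⟩
  have hlt : K.map H.subtype < H :=
    calc K.map H.subtype < (⊤ : Subgroup H).map H.subtype :=
          Subgroup.map_subtype_lt_map_subtype.2 (lt_top_iff_ne_top.2 hK)
      _ = H := by rw [← MonoidHom.range_eq_map, Subgroup.range_subtype]
  exact (Group.isNilpotent_congr (K.equivMapOfInjective _ H.subtype_injective)).2
    (not_not.1 (hmin.not_prop_of_lt hlt))

theorem statement_7_general (n : ℕ) (G : Fin n → Type*) [∀ i, Group (G i)] [∀ i, Finite (G i)]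
    (p q : ℕ) (hp : p.Prime) :
    HasSchmidtPQSubgroup p q (∀ i, G i) ↔ ∃ i, HasSchmidtPQSubgroup p q (G i) := by
  have : Fact p.Prime := ⟨hp⟩
  constructor
  · rintro ⟨S, hS⟩
    have : Finite S := hS.1.1
    obtain ⟨i, hi⟩ : ∃ i, ¬ Group.IsNilpotent (S.map (Pi.evalMonoidHom G i)) := by
      by_contra! h
      exact hS.1.2.1 (S.isNilpotent_of_forall_isNilpotent_map_eval h)
    have hpq := IsPQGroupWithNormalSylow.of_surjective _
      ((Pi.evalMonoidHom G i).subgroupMap_surjective S) hS.2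
    obtain ⟨H, -, hH⟩ := Subgroup.exists_le_isSchmidtPQGroup hi hpq
    exact ⟨i, H, hH⟩
  · rintro ⟨i, hi⟩
    classical
    exact hi.of_injective (MonoidHom.mulSingle G i) (Pi.mulSingle_injective i)

theorem statement_7 (n : ℕ) (G : Fin n → Type*) [∀ i, Group (G i)] [∀ i, Finite (G i)]
    (p q : ℕ) (hp : p.Prime) (hq : q.Prime) (hpq : p ≠ q) :
    HasSchmidtPQSubgroup p q (∀ i, G i) ↔ ∃ i, HasSchmidtPQSubgroup p q (G i) :=
  statement_7_general n G p q hp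
end

section
/- For any two distinct primes p and q there exists a Schmidt (p,q)-group; moreover, it can be chosen so that its Sylow p-subgroup is a normal elementary abelian p-group and its Sylow q-subgroup is cyclic of order q. -/
/-!
Let `K` be a finite field of characteristic `p` generated over `𝔽_p` by an element `ζ` of prime
order `q` (the subfield of `𝔽_{p^(q-1)}` generated by a primitive `q`-th root of unity), and let
`G = K ⋊ ⟨ζ⟩`, with `ζ` acting on `(K, +)` by multiplication. As `ζ` generates `K` as a ring, the
only `ζ`-stable additive subgroups of `K` are `0` and `K`. A proper subgroup `H` of `G` either lies
in `K`, or maps onto `⟨ζ⟩`; in the latter case `H ∩ K` is `ζ`-stable and proper, hence trivial,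
so `H` embeds into `⟨ζ⟩`. Either way `H` is abelian. On the other hand `[K, ζ] = (1 - ζ) K = K`,
so `K` lies in every term of the lower central series and `G` is not nilpotent. The normal
subgroup `K` has exponent `p` and index `q`, so it is the Sylow `p`-subgroup, and `⟨ζ⟩` is a
Sylow `q`-subgroup.
-/

open SemidirectProduct IntermediateField
open scoped commutatorElement IsMulCommutative

theorem Subgroup.isMulCommutative_of_inf_ker_eq_bot {G G' : Type*} [Group G] [CommGroup G']
    (f : G →* G') {H : Subgroup G} (h : H ⊓ f.ker = ⊥) : IsMulCommutative H := by
  refine IsMulCommutative.of_setLike_mul_comm fun x hx y hy => ?_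
  rw [← commutatorElement_eq_one_iff_mul_comm, ← Subgroup.mem_bot, ← h]
  exact ⟨H.mul_mem (H.mul_mem (H.mul_mem hx hy) (H.inv_mem hx)) (H.inv_mem hy), by
    simp [commutatorElement_def, mul_comm (f x)]⟩

section Sylow

variable {G : Type*} [Group G] [Finite G] {p : ℕ} [Fact p.Prime] {H : Subgroup G}

theorem Sylow.coe_eq_of_normal [H.Normal] (hH : IsPGroup p H) (hidx : ¬ p ∣ H.index)
    (P : Sylow p G) : (P : Subgroup G) = H := by
  have := Sylow.unique_of_normal (hH.toSylow hidx) (by rwa [IsPGroup.toSylow_coe])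
  rw [Subsingleton.elim P (hH.toSylow hidx), IsPGroup.toSylow_coe]

theorem Sylow.card_eq_of_isPGroup (hH : IsPGroup p H) (hidx : ¬ p ∣ H.index) (P : Sylow p G) :
    Nat.card P = Nat.card H := by
  rw [Nat.card_congr (P.equiv (hH.toSylow hidx)).toEquiv, IsPGroup.toSylow_coe]

end Sylow

theorem Multiplicative.pow_char_eq_one {R : Type*} [Ring R] (p : ℕ) [CharP R p]
    (x : Multiplicative R) : x ^ p = 1 := by
  rw [← ofAdd_toAdd x, ← ofAdd_nsmul, nsmul_eq_mul, CharP.cast_eq_zero, zero_mul, ofAdd_zero]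

theorem CharP.exists_natCard_eq_pow (R : Type*) [Ring R] [Finite R] (p : ℕ) [Fact p.Prime]
    [CharP R p] : ∃ k, Nat.card R = p ^ k :=
  (IsPGroup.iff_card (G := Multiplicative R)).mp fun x =>
    ⟨1, by rw [pow_one]; exact Multiplicative.pow_char_eq_one p x⟩

theorem Submodule.eq_bot_or_eq_top_of_mul_mem {F K : Type*} [Field F] [Field K] [Algebra F K]
    {ζ : K} (hζ : Algebra.adjoin F {ζ} = ⊤) (W : Submodule F K) (hW : ∀ w ∈ W, ζ * w ∈ W) :
    W = ⊥ ∨ W = ⊤ := by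
  let S : Subalgebra F K :=
    { carrier := {a | ∀ w ∈ W, a * w ∈ W}
      mul_mem' := fun ha hb w hw => by simpa only [mul_assoc] using ha _ (hb w hw)
      add_mem' := fun ha hb w hw => by simpa only [add_mul] using W.add_mem (ha w hw) (hb w hw)
      algebraMap_mem' := fun c w hw => by simpa only [Algebra.smul_def] using W.smul_mem c hw }
  have hS : S = ⊤ := top_unique (hζ ▸ Algebra.adjoin_le (by simpa [S] using hW))
  refine (eq_or_ne W ⊥).imp_right fun hne => eq_top_iff.mpr fun x _ => ?_
  obtain ⟨w, hw, hw0⟩ := W.ne_bot_iff.mp hne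
  simpa [hw0] using (hS ▸ Algebra.mem_top : x * w⁻¹ ∈ S) w hw

def ActsIrreducibly {K : Type*} [Field K] (ζ : K) : Prop :=
  ∀ W : AddSubgroup K, (∀ w ∈ W, ζ * w ∈ W) → W = ⊥ ∨ W = ⊤

theorem exists_unit_orderOf_eq_actsIrreducibly (p : ℕ) [Fact p.Prime] {L : Type} [Field L]
    [Finite L] [Algebra (ZMod p) L] (ζ : Lˣ) :
    ∃ (K : Type) (_ : Field K) (_ : Finite K) (_ : CharP K p) (ξ : Kˣ),
      orderOf ξ = orderOf ζ ∧ ActsIrreducibly (ξ : K) := by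
  let K := (ZMod p)⟮(ζ : L)⟯
  let ξ : Kˣ := Units.mk0 (AdjoinSimple.gen (ZMod p) (ζ : L))
    (fun h => ζ.ne_zero (by rw [← AdjoinSimple.algebraMap_gen (ZMod p) (ζ : L), h, map_zero]))
  have hξ : Units.map (algebraMap K L : K →* L) ξ = ζ := Units.ext (AdjoinSimple.algebraMap_gen _ _)
  refine ⟨K, inferInstance, inferInstance, charP_of_injective_algebraMap' (ZMod p) p, ξ, ?_,
    fun W hW => ?_⟩
  · exact (orderOf_injective _ (Units.map_injective (algebraMap K L).injective) ξ).symm.trans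
      (congrArg orderOf hξ)
  · have := Submodule.eq_bot_or_eq_top_of_mul_mem
      (adjoin.powerBasis (IsIntegral.of_finite (ZMod p) (ζ : L))).adjoin_gen_eq_top
      (AddSubgroup.toZModSubmodule p W) hW
    simpa using this

theorem GaloisField.exists_orderOf_eq (p q : ℕ) [Fact p.Prime] [Fact q.Prime] (hpq : p ≠ q) :
    ∃ ζ : (GaloisField p (q - 1))ˣ, orderOf ζ = q := by
  have hp : p.Prime := Fact.out
  have hq : q.Prime := Fact.out
  refine exists_prime_orderOf_dvd_card' q ?_
  rw [Nat.card_units, GaloisField.card p _ (by have := hq.two_le; omega), ← Nat.totient_prime hq]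
  exact (Nat.modEq_iff_dvd' (Nat.one_le_pow _ _ hp.pos)).mp
    (Nat.ModEq.pow_totient ((Nat.coprime_primes hp hq).mpr hpq)).symm

variable {K : Type*} [Field K]

def zpowersMulAut (ζ : Kˣ) : Subgroup.zpowers ζ →* MulAut (Multiplicative K) where
  toFun u := AddEquiv.toMultiplicative (DistribMulAction.toAddAut Kˣ K u)
  map_one' := by ext; simp
  map_mul' _ _ := by ext; simp [mul_smul]

theorem zpowersMulAut_apply {ζ : Kˣ} (g : Subgroup.zpowers ζ) (k : K) :
    zpowersMulAut ζ g (Multiplicative.ofAdd k) = Multiplicative.ofAdd (((g : Kˣ) : K) * k) := rfl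

abbrev SchmidtGroup (ζ : Kˣ) : Type _ := Multiplicative K ⋊[zpowersMulAut ζ] Subgroup.zpowers ζ

namespace SchmidtGroup

variable {ζ : Kˣ}

theorem mul_inl_mul_inv (x : SchmidtGroup ζ) (k : K) :
    x * inl (Multiplicative.ofAdd k) * x⁻¹ =
      inl (Multiplicative.ofAdd (((x.right : Kˣ) : K) * k)) :=
  calc x * inl (Multiplicative.ofAdd k) * x⁻¹
      = inl x.left * (inr x.right * inl (Multiplicative.ofAdd k) * inr x.right⁻¹) *
          inl x.left⁻¹ := by
        conv_lhs => rw [← inl_left_mul_inr_right x]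
        simp only [mul_inv_rev, map_inv, mul_assoc]
    _ = inl (Multiplicative.ofAdd (((x.right : Kˣ) : K) * k)) := by
        rw [← inl_aut, ← map_mul, ← map_mul, mul_inv_cancel_comm, zpowersMulAut_apply]

theorem commutator_inl_inr (k : K) (g : Subgroup.zpowers ζ) :
    ⁅(inl (Multiplicative.ofAdd k) : SchmidtGroup ζ), (inr g : SchmidtGroup ζ)⁆ =
      inl (Multiplicative.ofAdd ((1 - ((g : Kˣ) : K)) * k)) := by
  rw [commutatorElement_def, mul_assoc _ (inr g),
    ← map_inv (inl : Multiplicative K →* SchmidtGroup ζ), ← ofAdd_neg, mul_assoc, mul_inl_mul_inv,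
    right_inr, ← map_mul, ← ofAdd_add]
  ring_nf

theorem eq_inl_of_mem_ker {x : SchmidtGroup ζ} (hx : x ∈ rightHom.ker) : x = inl x.left := by
  ext
  · rfl
  · simpa using congrArg (fun g : Subgroup.zpowers ζ => ((g : Kˣ) : K)) hx

theorem mul_comm_of_mem_ker {x y : SchmidtGroup ζ} (hx : x ∈ rightHom.ker)
    (hy : y ∈ rightHom.ker) : x * y = y * x := by
  rw [eq_inl_of_mem_ker hx, eq_inl_of_mem_ker hy, ← map_mul, ← map_mul, mul_comm]

theorem pow_char_eq_one_of_mem_ker (p : ℕ) [CharP K p] {x : SchmidtGroup ζ}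
    (hx : x ∈ rightHom.ker) : x ^ p = 1 := by
  rw [eq_inl_of_mem_ker hx, ← map_pow, Multiplicative.pow_char_eq_one, map_one]

theorem isPGroup_ker (p : ℕ) [CharP K p] : IsPGroup p (rightHom.ker : Subgroup (SchmidtGroup ζ)) :=
  fun x => ⟨1, Subtype.ext (by simpa using pow_char_eq_one_of_mem_ker p x.2)⟩

theorem index_ker : (rightHom.ker : Subgroup (SchmidtGroup ζ)).index = orderOf ζ := by
  rw [Subgroup.index_ker, MonoidHom.range_eq_top.mpr rightHom_surjective, Subgroup.card_top,
    Nat.card_zpowers]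

theorem card_eq : Nat.card (SchmidtGroup ζ) = Nat.card K * orderOf ζ := by
  rw [SemidirectProduct.card, Nat.card_zpowers]
  rfl

theorem not_isNilpotent (hζ : ζ ≠ 1) : ¬ Group.IsNilpotent (SchmidtGroup ζ) := by
  have hζ' : (1 - ζ : K) ≠ 0 := sub_ne_zero.mpr fun h => hζ (Units.ext h.symm)
  have hker (n : ℕ) : rightHom.ker ≤ (⊤ : Subgroup (SchmidtGroup ζ)).lowerCentralSeries n := by
    induction n with
    | zero => exact le_top
    | succ n ih =>
      intro x hx
      have hx' : x = ⁅(inl (Multiplicative.ofAdd ((1 - ζ : K)⁻¹ * x.left.toAdd)) : SchmidtGroup ζ),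
          (inr ⟨ζ, Subgroup.mem_zpowers ζ⟩ : SchmidtGroup ζ)⁆ := by
        rw [commutator_inl_inr, ← mul_assoc, mul_inv_cancel₀ hζ', one_mul, ofAdd_toAdd,
          ← eq_inl_of_mem_ker hx]
      rw [hx']
      exact Subgroup.commutator_mem_commutator (ih (by simp)) (Subgroup.mem_top _)
  rw [Subgroup.nilpotent_iff_lowerCentralSeries]
  rintro ⟨n, hn⟩
  have := hker n (show inl (Multiplicative.ofAdd 1) ∈ rightHom.ker by simp)
  rw [hn, Subgroup.mem_bot, ← map_one inl, inl_inj] at this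
  exact one_ne_zero (Multiplicative.ofAdd.injective this)

theorem isMulCommutative_of_ne_top (hq : (orderOf ζ).Prime) (hirr : ActsIrreducibly (ζ : K))
    {H : Subgroup (SchmidtGroup ζ)} (hH : H ≠ ⊤) : IsMulCommutative H := by
  have : Fact (Nat.card (Subgroup.zpowers ζ)).Prime := ⟨(Nat.card_zpowers ζ).symm ▸ hq⟩
  rcases (H.map rightHom).eq_bot_or_eq_top_of_prime_card with hbot | htop
  · have hle := (H.map_eq_bot_iff).mp hbot
    exact IsMulCommutative.of_setLike_mul_comm fun x hx y hy =>
      mul_comm_of_mem_ker (hle hx) (hle hy)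
  obtain ⟨h, hh, hhζ⟩ : ⟨ζ, Subgroup.mem_zpowers ζ⟩ ∈ H.map rightHom := htop ▸ Subgroup.mem_top _
  let W : AddSubgroup K := Subgroup.toAddSubgroup' (H.comap inl)
  have mem_W (k : K) : k ∈ W ↔ inl (Multiplicative.ofAdd k) ∈ H := Iff.rfl
  have hW : ∀ w ∈ W, (ζ : K) * w ∈ W := by
    intro w hw
    have := H.mul_mem (H.mul_mem hh ((mem_W w).mp hw)) (H.inv_mem hh)
    rwa [mul_inl_mul_inv, show h.right = ⟨ζ, _⟩ from hhζ, ← mem_W] at this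
  have mem_W_of_mem_ker {x} (hx : x ∈ rightHom.ker) : x ∈ H ↔ x.left.toAdd ∈ W := by
    rw [mem_W, ofAdd_toAdd, ← eq_inl_of_mem_ker hx]
  rcases hirr W hW with hWbot | hWtop
  · refine Subgroup.isMulCommutative_of_inf_ker_eq_bot rightHom
      (eq_bot_iff.mpr fun x ⟨hxH, hxker⟩ => ?_)
    have hx := (mem_W_of_mem_ker hxker).mp hxH
    rw [hWbot, AddSubgroup.mem_bot] at hx
    rw [eq_inl_of_mem_ker hxker, Subgroup.mem_bot, ← ofAdd_toAdd x.left, hx, ofAdd_zero, map_one]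
  · have hker : rightHom.ker ≤ H := fun x hx =>
      (mem_W_of_mem_ker hx).mpr (hWtop ▸ AddSubgroup.mem_top _)
    exact absurd ((Subgroup.comap_map_eq_self hker).symm.trans (htop ▸ Subgroup.comap_top _)) hH

variable [Finite K] {p : ℕ} [Fact p.Prime] [CharP K p]

instance : Finite (SchmidtGroup ζ) := Finite.of_equiv _ equivProd.symm

theorem coe_sylow_eq_ker (hpq : ¬ p ∣ orderOf ζ) (P : Sylow p (SchmidtGroup ζ)) :
    (P : Subgroup (SchmidtGroup ζ)) = rightHom.ker :=
  Sylow.coe_eq_of_normal (isPGroup_ker p) (index_ker (ζ := ζ) ▸ hpq) P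

theorem card_sylow_orderOf [Fact (orderOf ζ).Prime] (hpq : p ≠ orderOf ζ)
    (Q : Sylow (orderOf ζ) (SchmidtGroup ζ)) : Nat.card Q = orderOf ζ := by
  have hcard : Nat.card (inr : _ →* SchmidtGroup ζ).range = orderOf ζ := by
    rw [← Nat.card_congr (MonoidHom.ofInjective inr_injective).toEquiv, Nat.card_zpowers]
  have hidx : (inr : _ →* SchmidtGroup ζ).range.index = Nat.card K := by
    have := (inr : _ →* SchmidtGroup ζ).range.index_mul_card
    rw [hcard, card_eq] at this
    exact Nat.eq_of_mul_eq_mul_right (orderOf_pos ζ) this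
  have hq_not_dvd : ¬ orderOf ζ ∣ (inr : _ →* SchmidtGroup ζ).range.index := by
    obtain ⟨k, hk⟩ := CharP.exists_natCard_eq_pow K p
    rw [hidx, hk, ← Nat.Prime.coprime_iff_not_dvd Fact.out]
    exact ((Nat.coprime_primes Fact.out Fact.out).mpr hpq.symm).pow_right k
  rw [Sylow.card_eq_of_isPGroup (.of_card (n := 1) (by rw [hcard, pow_one])) hq_not_dvd Q, hcard]

theorem isSchmidtPQGroup (hpq : p ≠ orderOf ζ) (hq : (orderOf ζ).Prime)
    (hirr : ActsIrreducibly (ζ : K)) : IsSchmidtPQGroup p (orderOf ζ) (SchmidtGroup ζ) := by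
  refine ⟨⟨inferInstance, not_isNilpotent ?_, fun H hH => ?_⟩, fun r hr hdvd => ?_, fun P => ?_⟩
  · rintro rfl
    exact hq.one_lt.ne' orderOf_one
  · have := isMulCommutative_of_ne_top hq hirr hH
    infer_instance
  · obtain ⟨k, hk⟩ := CharP.exists_natCard_eq_pow K p
    rw [card_eq, hk] at hdvd
    rcases (Nat.Prime.dvd_mul hr).mp hdvd with h | h
    · exact .inl ((Nat.prime_dvd_prime_iff_eq hr Fact.out).mp (hr.dvd_of_dvd_pow h))
    · exact .inr ((Nat.prime_dvd_prime_iff_eq hr hq).mp h)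
  · rw [coe_sylow_eq_ker (hpq ∘ (Nat.prime_dvd_prime_iff_eq Fact.out hq).mp) P]
    infer_instance

end SchmidtGroup

theorem statement_8 (p q : ℕ) (hp : p.Prime) (hq : q.Prime) (hpq : p ≠ q) :
    ∃ (G : Type) (_ : Group G), IsSchmidtPQGroup p q G ∧
      (∀ P : Sylow p G, (P : Subgroup G).Normal ∧
        (∀ x ∈ (P : Subgroup G), ∀ y ∈ (P : Subgroup G), x * y = y * x) ∧
        (∀ x ∈ (P : Subgroup G), x ^ p = 1)) ∧
      (∀ Q : Sylow q G, IsCyclic (Q : Subgroup G) ∧ Nat.card (Q : Subgroup G) = q) := by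
  have := Fact.mk hp
  have := Fact.mk hq
  obtain ⟨ω, hω⟩ := GaloisField.exists_orderOf_eq p q hpq
  obtain ⟨K, _, _, _, ζ, hζ, hirr⟩ := exists_unit_orderOf_eq_actsIrreducibly p ω
  rw [hω] at hζ
  subst hζ
  refine ⟨SchmidtGroup ζ, inferInstance, SchmidtGroup.isSchmidtPQGroup hpq hq hirr,
    fun P => ?_, fun Q => ?_⟩
  · rw [SchmidtGroup.coe_sylow_eq_ker (hpq ∘ (Nat.prime_dvd_prime_iff_eq hp hq).mp) P]
    exact ⟨inferInstance, fun x hx y hy => SchmidtGroup.mul_comm_of_mem_ker hx hy,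
      fun x hx => SchmidtGroup.pow_char_eq_one_of_mem_ker p hx⟩
  · have hQ := SchmidtGroup.card_sylow_orderOf hpq Q
    exact ⟨isCyclic_of_prime_card hQ, hQ⟩
end

section
/- Let p and q be distinct primes and let G be a Schmidt (p,q)-group. Then the quotient G/Φ(G) is again a Schmidt (p,q)-group; it has a unique minimal normal subgroup N; N is a p-group; and the quotient of G/Φ(G) by the centralizer of N in G/Φ(G) is cyclic of order q. -/
/-- `N` is a minimal normal subgroup. -/
def IsMinimalNormal {G : Type*} [Group G] (N : Subgroup G) : Prop :=
  N.Normal ∧ N ≠ ⊥ ∧ ∀ M : Subgroup G, M.Normal → M ≠ ⊥ → M ≤ N → M = N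

/-!
Every maximal subgroup of `G` contains `Φ(G)`, so the maximal subgroups of `G` and of
`H = G/Φ(G)` correspond: `H` is again a Schmidt `(p, q)`-group, and its centre, which lies in
`Φ(H) = 1`, is trivial. In `H` the Sylow subgroups `P ⊴ H` and `Q` are complements, and a
`p`-subgroup and a `q`-subgroup generating a proper (hence nilpotent) subgroup commute.
Proper subgroups of `Q` therefore centralize `P`: if `Q` were not cyclic it would be centralized
by `P`, hence normal, and `H` nilpotent; so `Q` is cyclic, its proper subgroups are central,
hence trivial, and `|Q| = q`. Likewise normal subgroups of `H` properly inside `P` centralize `Q`.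
Applied to `Z(P)`, which is nontrivial, this shows `P` is abelian, and then that `P` is minimal
normal. Finally `P ≤ C_H(P) < H` with `|H : P| = q` forces `C_H(P) = P`, and a minimal normal
subgroup meeting `P` trivially would centralize `P`; so `P` is the unique minimal normal subgroup.
-/

open Subgroup
open scoped Pointwise

section General

variable {G : Type*} [Group G]

theorem Subgroup.sup_inf_eq_of_coe_sup {A B C : Subgroup G}
    (hAB : ((A ⊔ B : Subgroup G) : Set G) = A * B) (hAC : A ≤ C) :
    (A ⊔ B) ⊓ C = A ⊔ (B ⊓ C) := by
  refine le_antisymm (fun x hx => ?_)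
    (le_inf (sup_le_sup_left inf_le_left A) (sup_le hAC inf_le_right))
  have hx' : x ∈ (A : Set G) * ↑(B ⊓ C) := by
    rw [mul_inf_assoc A B C hAC, ← hAB]
    exact hx
  obtain ⟨a, ha, b, hb, rfl⟩ := hx'
  exact mul_mem (mem_sup_left ha) (mem_sup_right hb)

theorem Subgroup.sup_ne_top_of_lt {X Y Z : Subgroup G}
    (hXY : ((X ⊔ Y : Subgroup G) : Set G) = X * Y) (hXZ : X < Z) (hYZ : Disjoint Y Z) :
    X ⊔ Y ≠ ⊤ := by
  intro htop
  have := sup_inf_eq_of_coe_sup hXY hXZ.le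
  rw [htop, top_inf_eq, hYZ.eq_bot, sup_bot_eq] at this
  exact hXZ.ne this.symm

theorem Subgroup.centralizer_sup (A B : Subgroup G) :
    centralizer ((A ⊔ B : Subgroup G) : Set G) = centralizer A ⊓ centralizer B := by
  rw [← closure_eq A, ← closure_eq B, ← closure_union, centralizer_closure, closure_eq,
    closure_eq]
  ext x
  simp [mem_centralizer_iff, or_imp, forall_and]

theorem Subgroup.le_center_of_le_centralizer {A B X : Subgroup G} (hAB : A ⊔ B = ⊤)
    (hA : X ≤ centralizer A) (hB : X ≤ centralizer B) : X ≤ center G := by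
  rw [← centralizer_univ, ← coe_top, ← hAB, centralizer_sup]
  exact le_inf hA hB

theorem Subgroup.isCoatom_map_of_ker_le {H : Type*} [Group H] {f : G →* H}
    (hf : Function.Surjective f) {M : Subgroup G} (hM : IsCoatom M) (hker : f.ker ≤ M) :
    IsCoatom (M.map f) := by
  refine ⟨fun h => hM.1 ?_, fun J hJ => ?_⟩
  · rw [← comap_map_eq_self hker, h, comap_top]
  · have : M < J.comap f := by
      rwa [← comap_map_eq_self hker, comap_lt_comap_of_surjective hf]
    rw [← map_comap_eq_self_of_surjective hf J, hM.2 _ this, map_top_of_surjective f hf]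

theorem comap_frattini_le_frattini {H : Type*} [Group H] {f : G →* H}
    (hf : Function.Surjective f) (hker : f.ker ≤ frattini G) :
    (frattini H).comap f ≤ frattini G := by
  simp_rw [frattini, Order.radical, comap_iInf, le_iInf_iff]
  intro M hM
  have hker' : f.ker ≤ M := hker.trans (frattini_le_coatom hM)
  calc ⨅ (K : Subgroup H) (_ : IsCoatom K), K.comap f
      ≤ (M.map f).comap f := biInf_le _ (isCoatom_map_of_ker_le hf hM hker')
    _ = M := comap_map_eq_self hker'

theorem frattini_quotient_frattini_eq_bot : frattini (G ⧸ frattini G) = ⊥ := by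
  have hmk := QuotientGroup.mk'_surjective (frattini G)
  rw [← map_comap_eq_self_of_surjective hmk (frattini _), Subgroup.map_eq_bot_iff,
    QuotientGroup.ker_mk']
  exact comap_frattini_le_frattini hmk (QuotientGroup.ker_mk' _).le

theorem le_frattini_iff {K : Subgroup G} :
    K ≤ frattini G ↔ ∀ M : Subgroup G, IsCoatom M → K ≤ M :=
  le_iInf₂_iff

theorem Subgroup.isNilpotent_map {H : Type*} [Group H] (f : G →* H) {K : Subgroup G}
    (hK : Group.IsNilpotent K) : Group.IsNilpotent (K.map f) :=
  Group.nilpotent_of_surjective _ (f.subgroupMap_surjective K)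

theorem isNilpotent_of_surjective_of_ker_le_frattini [Finite G] {H : Type*} [Group H]
    [Finite H] {f : G →* H} (hf : Function.Surjective f) (hker : f.ker ≤ frattini G)
    (hH : Group.IsNilpotent H) : Group.IsNilpotent G := by
  have hcoatom := ((Group.isNilpotent_of_finite_tfae (G := H)).out 0 2).mp hH
  refine ((Group.isNilpotent_of_finite_tfae (G := G)).out 0 2).mpr fun M hM => ?_
  have hkerM : f.ker ≤ M := hker.trans (frattini_le_coatom hM)
  simpa only [comap_map_eq_self hkerM] using
    (hcoatom _ (isCoatom_map_of_ker_le hf hM hkerM)).comap f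

theorem center_le_frattini_of_not_isNilpotent (hG : ¬ Group.IsNilpotent G)
    (hmax : ∀ M : Subgroup G, IsCoatom M → Group.IsNilpotent M) : center G ≤ frattini G := by
  refine le_frattini_iff.mpr fun M hM => ?_
  by_contra hZM
  have htop : M ⊔ center G = ⊤ := hM.2 _ (left_lt_sup.mpr hZM)
  have hmk := QuotientGroup.mk'_surjective (center G)
  have hmap : M.map (QuotientGroup.mk' (center G)) = ⊤ :=
    comap_injective hmk (by rw [comap_map_eq, QuotientGroup.ker_mk', htop, comap_top])
  have := isNilpotent_map (QuotientGroup.mk' (center G)) (hmax M hM)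
  rw [hmap, Group.isNilpotent_top] at this
  exact hG (Group.of_quotient_center_nilpotent this)

theorem IsPGroup.le_centralizer_of_isNilpotent {p q : ℕ} [Fact p.Prime] [Fact q.Prime]
    (hpq : p ≠ q) [Finite G] {A B W : Subgroup G} (hW : Group.IsNilpotent W) (hAW : A ≤ W)
    (hBW : B ≤ W) (hA : IsPGroup p A) (hB : IsPGroup q B) : A ≤ centralizer B := by
  obtain ⟨S, hS⟩ := (hA.comap_of_injective W.subtype Subtype.coe_injective).exists_le_sylow
  obtain ⟨T, hT⟩ := (hB.comap_of_injective W.subtype Subtype.coe_injective).exists_le_sylow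
  have hnormal := ((Group.isNilpotent_of_finite_tfae (G := W)).out 0 3).mp hW
  have hST := commute_of_normal_of_disjoint _ _ (hnormal p ‹_› S) (hnormal q ‹_› T)
    (IsPGroup.disjoint_of_ne p q hpq _ _ S.isPGroup' T.isPGroup')
  intro a ha b hb
  exact congrArg Subtype.val (hST ⟨a, hAW ha⟩ ⟨b, hBW hb⟩ (hS ha) (hT hb)).symm.eq

theorem Sylow.isComplement'_of_primeFactors_subset [Finite G] {p q : ℕ} [hp : Fact p.Prime]
    [hq : Fact q.Prime] (hpq : p ≠ q)
    (hG : ∀ r : ℕ, r.Prime → r ∣ Nat.card G → r = p ∨ r = q)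
    (P : Sylow p G) (Q : Sylow q G) : IsComplement' (P : Subgroup G) Q := by
  refine isComplement'_of_coprime ?_ ?_
  · rw [P.card_eq_multiplicity, Q.card_eq_multiplicity,
      ← Finset.prod_pair (f := fun r => r ^ (Nat.card G).factorization r) hpq]
    conv_rhs => rw [← Nat.prod_factorization_pow_eq_self Nat.card_pos.ne']
    refine (Finsupp.prod_of_support_subset _ (fun r hr => ?_) _ (fun _ _ => pow_zero _)).symm
    rw [Nat.support_factorization, Nat.mem_primeFactors] at hr
    simpa using hG r hr.1 hr.2.1
  · rw [P.card_eq_multiplicity, Q.card_eq_multiplicity]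
    exact ((Nat.coprime_primes hp.out hq.out).mpr hpq).pow _ _

theorem isNilpotent_of_sylow_normal_of_primeFactors_subset [Finite G] {p q : ℕ}
    [Fact p.Prime] [Fact q.Prime] (hG : ∀ r : ℕ, r.Prime → r ∣ Nat.card G → r = p ∨ r = q)
    (P : Sylow p G) (Q : Sylow q G) (hP : (P : Subgroup G).Normal)
    (hQ : (Q : Subgroup G).Normal) : Group.IsNilpotent G := by
  refine ((Group.isNilpotent_of_finite_tfae (G := G)).out 0 3).mpr ?_
  intro r hr S
  by_cases hdvd : r ∣ Nat.card G
  · rcases hG r hr.out hdvd with rfl | rfl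
    · have := Sylow.unique_of_normal P hP
      rwa [Subsingleton.elim S P]
    · have := Sylow.unique_of_normal Q hQ
      rwa [Subsingleton.elim S Q]
  · have hS : Nat.card (S : Subgroup G) = 1 := by
      rw [S.card_eq_multiplicity, Nat.factorization_eq_zero_of_not_dvd hdvd, pow_zero]
    rw [Subgroup.card_eq_one.mp hS]
    infer_instance

end General

theorem IsSchmidtPQGroup.of_surjective_of_ker_le_frattini {p q : ℕ} [Fact p.Prime]
    {G H : Type*} [Group G] [Group H] (hG : IsSchmidtPQGroup p q G) {f : G →* H}
    (hf : Function.Surjective f) (hker : f.ker ≤ frattini G) : IsSchmidtPQGroup p q H := by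
  obtain ⟨⟨hfin, hnn, hprop⟩, hdiv, hsyl⟩ := hG
  have : Finite H := Finite.of_surjective f hf
  refine ⟨⟨this, fun hH => hnn (isNilpotent_of_surjective_of_ker_le_frattini hf hker hH),
    fun K hK => ?_⟩, fun r hr hrH => hdiv r hr (hrH.trans (card_dvd_of_surjective f hf)),
    fun S => ?_⟩
  · have hfK := map_comap_eq_self_of_surjective hf K
    have hK' : K.comap f ≠ ⊤ := fun h => hK (by rw [← hfK, h, map_top_of_surjective f hf])
    rw [← hfK]
    exact isNilpotent_map f (hprop _ hK')
  · obtain ⟨P, rfl⟩ := Sylow.mapSurjective_surjective hf p S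
    exact (hsyl P).map f hf

theorem IsSchmidtGroup.le_centralizer_of_sup_ne_top {p q : ℕ} [Fact p.Prime] [Fact q.Prime]
    (hpq : p ≠ q) {H : Type*} [Group H] (hH : IsSchmidtGroup H) {A B : Subgroup H}
    (hA : IsPGroup p A) (hB : IsPGroup q B) (hAB : A ⊔ B ≠ ⊤) : A ≤ centralizer B :=
  have := hH.1
  hA.le_centralizer_of_isNilpotent hpq (hH.2.2 _ hAB) le_sup_left le_sup_right hB

namespace IsSchmidtPQGroup

variable {p q : ℕ} [Fact p.Prime] [Fact q.Prime] {H : Type*} [Group H]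

theorem isComplement' (hpq : p ≠ q) (hH : IsSchmidtPQGroup p q H) (P : Sylow p H)
    (Q : Sylow q H) : IsComplement' (P : Subgroup H) Q :=
  have := hH.1.1
  Sylow.isComplement'_of_primeFactors_subset hpq hH.2.1 P Q

theorem le_centralizer_of_lt_sylow (hpq : p ≠ q) (hH : IsSchmidtPQGroup p q H) (P : Sylow p H)
    (Q : Sylow q H) {R : Subgroup H} (hRQ : R < Q) : R ≤ centralizer (P : Subgroup H) :=
  have := hH.2.2 P
  hH.1.le_centralizer_of_sup_ne_top hpq.symm (Q.isPGroup'.to_le hRQ.le) P.isPGroup'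
    (sup_ne_top_of_lt (mul_normal _ _) hRQ (hH.isComplement' hpq P Q).disjoint)

theorem le_centralizer_of_normal_of_lt_sylow (hpq : p ≠ q) (hH : IsSchmidtPQGroup p q H)
    (P : Sylow p H) (Q : Sylow q H) {K : Subgroup H} (hK : K.Normal) (hKP : K < P) :
    K ≤ centralizer (Q : Subgroup H) :=
  hH.1.le_centralizer_of_sup_ne_top hpq (P.isPGroup'.to_le hKP.le) Q.isPGroup'
    (sup_ne_top_of_lt (normal_mul _ _) hKP (hH.isComplement' hpq P Q).disjoint.symm)

theorem not_normal_sylow (hH : IsSchmidtPQGroup p q H) (Q : Sylow q H) :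
    ¬ (Q : Subgroup H).Normal := fun hQ =>
  have := hH.1.1
  hH.1.2.1 (isNilpotent_of_sylow_normal_of_primeFactors_subset hH.2.1 Sylow.nonempty.some Q
    (hH.2.2 _) hQ)

theorem exists_zpowers_eq_sylow (hpq : p ≠ q) (hH : IsSchmidtPQGroup p q H) (Q : Sylow q H) :
    ∃ y : H, zpowers y = Q := by
  by_contra! hne
  have := hH.1.1
  let P : Sylow p H := Sylow.nonempty.some
  have hQP : (Q : Subgroup H) ≤ centralizer (P : Subgroup H) := fun y hy =>
    hH.le_centralizer_of_lt_sylow hpq P Q (lt_of_le_of_ne (zpowers_le.mpr hy) (hne y))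
      (mem_zpowers y)
  refine hH.not_normal_sylow Q (normalizer_eq_top_iff.mp (top_le_iff.mp ?_))
  rw [← (hH.isComplement' hpq P Q).sup_eq_top]
  exact sup_le ((le_centralizer_iff.mp hQP).trans (centralizer_le_normalizer _)) le_normalizer

theorem eq_bot_of_le_centralizer_sylow (hpq : p ≠ q) (hH : IsSchmidtPQGroup p q H)
    (hZ : center H = ⊥) (P : Sylow p H) (Q : Sylow q H) {X : Subgroup H}
    (hXP : X ≤ centralizer (P : Subgroup H)) (hXQ : X ≤ centralizer (Q : Subgroup H)) :
    X = ⊥ :=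
  le_bot_iff.mp (hZ ▸ le_center_of_le_centralizer (hH.isComplement' hpq P Q).sup_eq_top hXP hXQ)

theorem card_sylow_eq (hpq : p ≠ q) (hH : IsSchmidtPQGroup p q H) (hZ : center H = ⊥)
    (P : Sylow p H) (Q : Sylow q H) : Nat.card Q = q := by
  have := hH.1.1
  obtain ⟨y, hy⟩ := hH.exists_zpowers_eq_sylow hpq Q
  have hQ : (Q : Subgroup H) ≤ centralizer (Q : Subgroup H) := by
    rw [← hy]
    exact le_centralizer (zpowers y)
  have hQbot : (Q : Subgroup H) ≠ ⊥ := fun h => hH.not_normal_sylow Q (h ▸ normal_bot)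
  obtain ⟨x, hx⟩ := exists_prime_orderOf_dvd_card' (G := Q) q
    (Q.isPGroup'.card_eq_or_dvd.resolve_left (card_eq_one.not.mpr hQbot))
  have hxQ : zpowers (x : H) = Q := by
    by_contra hne
    have hlt := lt_of_le_of_ne (zpowers_le.mpr x.2) hne
    have hbot := hH.eq_bot_of_le_centralizer_sylow hpq hZ P Q
      (hH.le_centralizer_of_lt_sylow hpq P Q hlt) (hlt.le.trans hQ)
    rw [zpowers_eq_bot, OneMemClass.coe_eq_one] at hbot
    rw [hbot, orderOf_one] at hx
    exact (Fact.out : q.Prime).one_lt.ne hx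
  rw [← hxQ, Nat.card_zpowers, orderOf_coe, hx]

theorem sylow_ne_bot (hpq : p ≠ q) (hH : IsSchmidtPQGroup p q H) (P : Sylow p H)
    (Q : Sylow q H) : (P : Subgroup H) ≠ ⊥ := by
  intro h
  have hQ := (hH.isComplement' hpq P Q).sup_eq_top
  rw [h, bot_sup_eq] at hQ
  exact hH.not_normal_sylow Q (hQ ▸ normal_top)

theorem sylow_le_centralizer (hpq : p ≠ q) (hH : IsSchmidtPQGroup p q H) (hZ : center H = ⊥)
    (P : Sylow p H) (Q : Sylow q H) : (P : Subgroup H) ≤ centralizer (P : Subgroup H) := by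
  have := hH.1.1
  have := hH.2.2 P
  have : Nontrivial (P : Subgroup H) :=
    (P : Subgroup H).nontrivial_iff_ne_bot.mpr (hH.sylow_ne_bot hpq P Q)
  obtain ⟨z, hzZ, hz1⟩ := SetLike.exists_of_lt P.isPGroup'.bot_lt_center
  have hzC : (z : H) ∈ (P : Subgroup H) ⊓ centralizer (P : Subgroup H) :=
    ⟨z.2, fun h hh => congrArg Subtype.val (mem_center_iff.mp hzZ ⟨h, hh⟩)⟩
  by_contra hPC
  have hlt : (P : Subgroup H) ⊓ centralizer (P : Subgroup H) < P :=
    inf_le_left.lt_of_ne (mt inf_eq_left.mp hPC)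
  have hbot := hH.eq_bot_of_le_centralizer_sylow hpq hZ P Q inf_le_right
    (hH.le_centralizer_of_normal_of_lt_sylow hpq P Q inferInstance hlt)
  rw [hbot, mem_bot, OneMemClass.coe_eq_one] at hzC
  exact hz1 (hzC ▸ one_mem _)

theorem index_sylow_eq (hpq : p ≠ q) (hH : IsSchmidtPQGroup p q H) (hZ : center H = ⊥)
    (P : Sylow p H) (Q : Sylow q H) : (P : Subgroup H).index = q :=
  (hH.isComplement' hpq P Q).symm.index_eq_card.trans (hH.card_sylow_eq hpq hZ P Q)

theorem centralizer_sylow_eq (hpq : p ≠ q) (hH : IsSchmidtPQGroup p q H) (hZ : center H = ⊥)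
    (P : Sylow p H) (Q : Sylow q H) : centralizer ((P : Subgroup H) : Set H) = P := by
  have hPC := hH.sylow_le_centralizer hpq hZ P Q
  set C : Subgroup H := centralizer (P : Subgroup H)
  have hCtop : C.index ≠ 1 := fun h =>
    hH.sylow_ne_bot hpq P Q (hH.eq_bot_of_le_centralizer_sylow hpq hZ P Q hPC
      (le_centralizer_iff.mp (le_top.trans_eq (index_eq_one.mp h).symm)))
  have hprime : ((P : Subgroup H).relIndex C * C.index).Prime := by
    rw [relIndex_mul_index hPC, hH.index_sylow_eq hpq hZ P Q]
    exact Fact.out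
  rcases Nat.prime_mul_iff.mp hprime with ⟨-, h⟩ | ⟨-, h⟩
  · exact absurd h hCtop
  · exact le_antisymm (relIndex_eq_one.mp h) hPC

theorem isMinimalNormal_sylow (hpq : p ≠ q) (hH : IsSchmidtPQGroup p q H) (hZ : center H = ⊥)
    (P : Sylow p H) (Q : Sylow q H) : IsMinimalNormal (P : Subgroup H) := by
  refine ⟨hH.2.2 P, hH.sylow_ne_bot hpq P Q, fun K hK hK0 hKP => ?_⟩
  by_contra hne
  exact hK0 (hH.eq_bot_of_le_centralizer_sylow hpq hZ P Q
    (hKP.trans (hH.sylow_le_centralizer hpq hZ P Q))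
    (hH.le_centralizer_of_normal_of_lt_sylow hpq P Q hK (hKP.lt_of_ne hne)))

theorem eq_sylow_of_isMinimalNormal (hpq : p ≠ q) (hH : IsSchmidtPQGroup p q H)
    (hZ : center H = ⊥) (P : Sylow p H) (Q : Sylow q H) {M : Subgroup H}
    (hM : IsMinimalNormal M) : M = P := by
  obtain ⟨hMn, hM0, hMmin⟩ := hM
  have hPn := hH.2.2 P
  have hMP : M ⊓ P ≠ ⊥ := by
    intro h
    have hMC : M ≤ centralizer (P : Subgroup H) :=
      commutator_eq_bot_iff_le_centralizer.mp (le_bot_iff.mp (h ▸ commutator_le_inf M P))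
    rw [hH.centralizer_sylow_eq hpq hZ P Q] at hMC
    exact hM0 (inf_eq_left.mpr hMC ▸ h)
  have hPM : (P : Subgroup H) ≤ M :=
    ((hH.isMinimalNormal_sylow hpq hZ P Q).2.2 _ inferInstance hMP inf_le_right) ▸ inf_le_left
  exact (hMmin _ hPn (hH.sylow_ne_bot hpq P Q) hPM).symm

end IsSchmidtPQGroup

theorem statement_10 (p q : ℕ) (hp : p.Prime) (hq : q.Prime) (hpq : p ≠ q)
    (G : Type*) [Group G] (hG : IsSchmidtPQGroup p q G) :
    IsSchmidtPQGroup p q (G ⧸ frattini G) ∧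
    ∃ N : Subgroup (G ⧸ frattini G), IsMinimalNormal N ∧
      (∀ M : Subgroup (G ⧸ frattini G), IsMinimalNormal M → M = N) ∧
      IsPGroup p N ∧
      ∃ _ : (Subgroup.centralizer (N : Set (G ⧸ frattini G))).Normal,
        IsCyclic ((G ⧸ frattini G) ⧸ Subgroup.centralizer (N : Set (G ⧸ frattini G))) ∧
        Nat.card ((G ⧸ frattini G) ⧸ Subgroup.centralizer (N : Set (G ⧸ frattini G))) = q := by
  have := Fact.mk hp
  have := Fact.mk hq
  have hH : IsSchmidtPQGroup p q (G ⧸ frattini G) :=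
    hG.of_surjective_of_ker_le_frattini (QuotientGroup.mk'_surjective _)
      (QuotientGroup.ker_mk' _).le
  have hZ : center (G ⧸ frattini G) = ⊥ := by
    rw [← le_bot_iff, ← frattini_quotient_frattini_eq_bot]
    exact center_le_frattini_of_not_isNilpotent hH.1.2.1 fun M hM => hH.1.2.2 M hM.1
  have := hH.1.1
  obtain ⟨P⟩ : Nonempty (Sylow p (G ⧸ frattini G)) := Sylow.nonempty
  obtain ⟨Q⟩ : Nonempty (Sylow q (G ⧸ frattini G)) := Sylow.nonempty
  have hPn := hH.2.2 P
  have hcard : Nat.card ((G ⧸ frattini G) ⧸ (P : Subgroup (G ⧸ frattini G))) = q := by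
    rw [← index_eq_card, hH.index_sylow_eq hpq hZ P Q]
  refine ⟨hH, P, hH.isMinimalNormal_sylow hpq hZ P Q,
    fun M hM => hH.eq_sylow_of_isMinimalNormal hpq hZ P Q hM, P.isPGroup', ?_⟩
  rw [hH.centralizer_sylow_eq hpq hZ P Q]
  exact ⟨hPn, isCyclic_of_prime_card hcard, hcard⟩
end

section
/- Let G be a finite group that is not soluble but all of whose proper subgroups are soluble. Then G/Φ(G) is a nonabelian simple group, and every proper subgroup of G/Φ(G) is soluble. -/
/-!
If a proper normal subgroup `N` of a minimal non-soluble group `G` escaped some maximal subgroup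
`K`, then `G = K N` would be an extension of the soluble group `N` by the soluble group
`G / N ≅ K / (K ∩ N)`. So every proper normal subgroup of `G` lies in `Φ(G)`, which makes
`G / Φ(G)` simple. It is not soluble because `Φ(G)` is nilpotent, and its proper subgroups are
images of proper subgroups of `G`.
-/

open Subgroup QuotientGroup

section

variable {G Q : Type*} [Group G] [Group Q]

theorem isSolvable_of_sup_eq_top {N K : Subgroup G} [N.Normal] [Group.IsSolvable N]
    [Group.IsSolvable K] (hKN : K ⊔ N = ⊤) : Group.IsSolvable G := by
  have hsurj : Function.Surjective ((mk' N).comp K.subtype) := by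
    rw [← MonoidHom.range_eq_top, MonoidHom.range_comp, range_subtype,
      ← (comap_injective (mk'_surjective N)).eq_iff, comap_map_eq, comap_top, ker_mk', hKN]
  have := Group.isSolvable_of_surjective hsurj
  exact (Group.isSolvable_iff_subgroup_quotient N).2 ⟨‹_›, this⟩

theorem exists_isCoatom_sup_eq_top_of_not_le_frattini {H : Subgroup G}
    (h : ¬ H ≤ frattini G) : ∃ K, IsCoatom K ∧ K ⊔ H = ⊤ := by
  simp only [frattini, Order.radical, le_iInf₂_iff, not_forall] at h
  obtain ⟨K, hK, hHK⟩ := h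
  exact ⟨K, hK, hK.2 _ (left_lt_sup.2 hHK)⟩

theorem le_frattini_of_normal_of_ne_top (hns : ¬ Group.IsSolvable G)
    (hmin : ∀ H : Subgroup G, H ≠ ⊤ → Group.IsSolvable H) {N : Subgroup G} [N.Normal]
    (hN : N ≠ ⊤) : N ≤ frattini G := by
  by_contra h
  obtain ⟨K, hK, hKN⟩ := exists_isCoatom_sup_eq_top_of_not_le_frattini h
  have := hmin N hN
  have := hmin K hK.1
  exact hns (isSolvable_of_sup_eq_top hKN)

theorem comap_ne_top_of_surjective {f : G →* Q} (hf : Function.Surjective f) {H : Subgroup Q}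
    (hH : H ≠ ⊤) : H.comap f ≠ ⊤ := by
  rw [← comap_top f]
  exact (comap_injective hf).ne hH

theorem isSolvable_of_ne_top_of_surjective {f : G →* Q} (hf : Function.Surjective f)
    (hmin : ∀ H : Subgroup G, H ≠ ⊤ → Group.IsSolvable H) (H : Subgroup Q)
    (hH : H ≠ ⊤) : Group.IsSolvable H := by
  have : Group.IsSolvable (H.comap f) := hmin _ (comap_ne_top_of_surjective hf hH)
  rw [← map_comap_eq_self_of_surjective hf H]
  exact Group.isSolvable_of_surjective (f.subgroupMap_surjective _)

end

theorem statement_11 (G : Type*) [Group G] [Finite G]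
    (hns : ¬ IsSolvable G) (hmin : ∀ H : Subgroup G, H ≠ ⊤ → IsSolvable H) :
    IsSimpleGroup (G ⧸ frattini G) ∧ (¬ ∀ a b : G ⧸ frattini G, a * b = b * a) ∧
    (∀ H : Subgroup (G ⧸ frattini G), H ≠ ⊤ → IsSolvable H) := by
  have hsurj := mk'_surjective (frattini G)
  have : Group.IsNilpotent (frattini G) := frattini_nilpotent
  have hQns : ¬ Group.IsSolvable (G ⧸ frattini G) :=
    fun h ↦ hns ((Group.isSolvable_iff_subgroup_quotient _).2 ⟨inferInstance, h⟩)
  have : Nontrivial (G ⧸ frattini G) :=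
    not_subsingleton_iff_nontrivial.1 fun _ ↦ hQns inferInstance
  refine ⟨⟨fun N _ ↦ or_iff_not_imp_right.2 fun hN ↦ ?_⟩,
    fun h ↦ hQns (Group.isSolvable_of_comm h), isSolvable_of_ne_top_of_surjective hsurj hmin⟩
  have hNΦ := le_frattini_of_normal_of_ne_top hns hmin (comap_ne_top_of_surjective hsurj hN)
  rwa [eq_bot_iff, ← map_comap_eq_self_of_surjective hsurj N, map_le_iff_le_comap,
    MonoidHom.comap_bot, ker_mk']
end
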